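/- Let B_1,…,B_n be p×m complex matrices with F_0(z) = ∑_{j=1}^n z^{-j} B_j satisfying F_0(z) F_0(z)* = I_p for all z on the unit circle, and suppose n = ρκ for integers ρ, κ ≥ 1. For i = 1,…,κ let 𝐁_i be the p×ρm matrix obtained by placing B_{(i−1)ρ+1}, B_{(i−1)ρ+2}, …, B_{iρ} side by side (the a-th p×m block of 𝐁_i is B_{(i−1)ρ+a}). Then G(z) = ∑_{i=1}^{κ} z^{-i} 𝐁_i satisfies G(z) G(z)* = I_p for all z on the unit circle. -/

import Mathlib

/-!
Polyphase decomposition: if `u ^ ρ = z`, then `F₀(u) = ∑_{a<ρ} u^(ρ-1-a) P_a(z)`, where `P_a(z)`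
is the `a`-th block column of `G(z)`, so that `G(z) G(z)* = ∑_a P_a(z) P_a(z)*`. Averaging the
identity `F₀(u) F₀(u)* = I` over the `ρ` roots `u = w ωᵏ` of `z` kills the cross terms
`u^(a'-a) P_a P_{a'}*`, because `0 < |a' - a| < ρ`, and leaves `ρ G(z) G(z)* = ρ I`.
-/

open Matrix Finset

theorem sum_range_mul_eq_sum_sum {M : Type*} [AddCommMonoid M] (f : ℕ → M) (ρ κ : ℕ) :
    ∑ j ∈ range (ρ * κ), f j = ∑ i ∈ range κ, ∑ a ∈ range ρ, f (ρ * i + a) := by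
  induction κ with
  | zero => simp
  | succ κ ih => rw [Nat.mul_succ, sum_range_add, ih, sum_range_succ]

theorem IsPrimitiveRoot.sum_mul_pow_zpow_eq_zero {K : Type*} [Field K] {ω : K} {ρ : ℕ}
    (hω : IsPrimitiveRoot ω ρ) (w : K) {d : ℤ} (hd : ¬ (ρ : ℤ) ∣ d) :
    ∑ k ∈ range ρ, (w * ω ^ k) ^ d = 0 := by
  have hne : ω ^ d ≠ 1 := fun h => hd ((hω.zpow_eq_one_iff_dvd d).1 h)
  have hpow : (ω ^ d) ^ ρ = 1 := by
    rw [← zpow_natCast, ← _root_.zpow_mul, mul_comm, _root_.zpow_mul, hω.zpow_eq_one,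
      _root_.one_zpow]
  have hterm : ∀ k : ℕ, (w * ω ^ k) ^ d = w ^ d * (ω ^ d) ^ k := fun k => by
    rw [mul_zpow, ← zpow_natCast ω, ← _root_.zpow_mul, mul_comm (k : ℤ), _root_.zpow_mul,
      zpow_natCast, mul_comm]
  simp only [hterm, ← Finset.mul_sum]
  rw [geom_sum_eq hne, hpow, sub_self, zero_div, mul_zero]

theorem IsPrimitiveRoot.norm_mul_pow_eq_one {ρ : ℕ} {ω : ℂ} (hω : IsPrimitiveRoot ω ρ)
    (hρ : ρ ≠ 0) {w : ℂ} (hw : ‖w‖ = 1) (k : ℕ) : ‖w * ω ^ k‖ = 1 := by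
  rw [norm_mul, norm_pow, hw, hω.norm'_eq_one hρ, one_pow, one_mul]

section

variable {α β : Type*}

def sideBySide {R : Type*} {ρ : ℕ} (M : Fin ρ → Matrix α β R) : Matrix α (Fin ρ × β) R :=
  of fun x r => M r.1 x r.2

theorem sideBySide_mul_conjTranspose {R : Type*} [NonUnitalNonAssocSemiring R] [StarRing R]
    [Fintype β] {ρ : ℕ} (M : Fin ρ → Matrix α β R) :
    sideBySide M * (sideBySide M)ᴴ = ∑ a, M a * (M a)ᴴ := by
  ext x y
  simp [sideBySide, mul_apply, Fintype.sum_prod_type, Matrix.sum_apply]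

/-- The coefficient `C j` multiplies `z ^ (-(j + 1))`: the paper's `B_{j+1}` is `C j`. -/
noncomputable def fir (C : ℕ → Matrix α β ℂ) (N : ℕ) (z : ℂ) : Matrix α β ℂ :=
  ∑ j ∈ range N, z ^ (-(j + 1 : ℤ)) • C j

theorem fir_sideBySide {ρ : ℕ} (C : ℕ → Fin ρ → Matrix α β ℂ) (N : ℕ) (z : ℂ) :
    fir (fun j => sideBySide (C j)) N z = sideBySide fun a => fir (fun j => C j a) N z := by
  ext x r
  simp [fir, sideBySide, Matrix.sum_apply]

theorem fir_mul_eq_sum_polyphase (C : ℕ → Matrix α β ℂ) (ρ κ : ℕ) {u : ℂ} (hu : u ≠ 0) :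
    fir C (ρ * κ) u
      = ∑ a : Fin ρ, u ^ ((ρ : ℤ) - 1 - a) • fir (fun i => C (ρ * i + a)) κ (u ^ ρ) := by
  rw [Fin.sum_univ_eq_sum_range
    (fun a => u ^ ((ρ : ℤ) - 1 - a) • fir (fun i => C (ρ * i + a)) κ (u ^ ρ))]
  simp only [fir, smul_sum, smul_smul, sum_range_mul_eq_sum_sum]
  rw [sum_comm]
  refine sum_congr rfl fun a _ => sum_congr rfl fun i _ => ?_
  rw [← zpow_natCast u ρ, ← _root_.zpow_mul, ← zpow_add₀ hu]
  push_cast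
  ring_nf

theorem sum_zpow_smul_mul_conjTranspose [Fintype β] {ι : Type*} (s : Finset ι) (e : ι → ℤ)
    (M : ι → Matrix α β ℂ) {u : ℂ} (hu : ‖u‖ = 1) :
    (∑ a ∈ s, u ^ e a • M a) * (∑ a ∈ s, u ^ e a • M a)ᴴ
      = ∑ a ∈ s, ∑ b ∈ s, u ^ (e a - e b) • (M a * (M b)ᴴ) := by
  have hu0 : u ≠ 0 := norm_ne_zero_iff.mp (by rw [hu]; exact one_ne_zero)
  rw [conjTranspose_sum, Matrix.sum_mul]
  refine sum_congr rfl fun a _ => ?_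
  rw [Matrix.mul_sum]
  refine sum_congr rfl fun b _ => ?_
  rw [conjTranspose_smul, Matrix.smul_mul, Matrix.mul_smul, smul_smul, zpow_sub₀ hu0,
    Complex.star_def, map_zpow₀, ← Complex.inv_eq_conj hu, _root_.inv_zpow, div_eq_mul_inv]

theorem sum_mul_pow_zpow_sub_smul_mul_conjTranspose [Fintype β] {ρ : ℕ} {ω : ℂ}
    (hω : IsPrimitiveRoot ω ρ) {w : ℂ} (hw : ‖w‖ = 1) (c : ℤ) (M : Fin ρ → Matrix α β ℂ) :
    ∑ k ∈ range ρ, (∑ a : Fin ρ, (w * ω ^ k) ^ (c - a) • M a) *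
        (∑ a : Fin ρ, (w * ω ^ k) ^ (c - a) • M a)ᴴ
      = (ρ : ℂ) • ∑ a, M a * (M a)ᴴ := by
  have hcross : ∀ a b : Fin ρ, b ≠ a →
      ∑ k ∈ range ρ, (w * ω ^ k) ^ ((c - a) - (c - b)) = 0 := by
    intro a b hba
    refine hω.sum_mul_pow_zpow_eq_zero w fun hdvd => hba (Fin.ext ?_)
    have : (b : ℤ) - a = 0 := Int.eq_zero_of_abs_lt_dvd (by simpa using hdvd)
      (by rw [abs_sub_lt_iff]; omega)
    omega
  calc _ = ∑ k ∈ range ρ, ∑ a : Fin ρ, ∑ b : Fin ρ,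
          (w * ω ^ k) ^ ((c - a) - (c - b)) • (M a * (M b)ᴴ) :=
        sum_congr rfl fun k hk => sum_zpow_smul_mul_conjTranspose _ _ _
          (hω.norm_mul_pow_eq_one (by simp at hk; omega) hw k)
    _ = ∑ a : Fin ρ, ∑ b : Fin ρ,
          (∑ k ∈ range ρ, (w * ω ^ k) ^ ((c - a) - (c - b))) • (M a * (M b)ᴴ) := by
        simp only [sum_smul]
        rw [sum_comm]
        exact sum_congr rfl fun a _ => sum_comm
    _ = ∑ a : Fin ρ, (ρ : ℂ) • (M a * (M a)ᴴ) := sum_congr rfl fun a _ => by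
        rw [sum_eq_single a (fun b _ hba => by rw [hcross a b hba, zero_smul]) (by simp)]
        simp
    _ = (ρ : ℂ) • ∑ a, M a * (M a)ᴴ := smul_sum.symm

theorem fir_sideBySide_mul_conjTranspose_eq_one [Fintype β] [DecidableEq α]
    (C : ℕ → Matrix α β ℂ) {ρ : ℕ} (hρ : ρ ≠ 0) (κ : ℕ)
    (hC : ∀ u : ℂ, ‖u‖ = 1 → fir C (ρ * κ) u * (fir C (ρ * κ) u)ᴴ = 1)
    {z : ℂ} (hz : ‖z‖ = 1) :
    fir (fun i => sideBySide fun a : Fin ρ => C (ρ * i + a)) κ z *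
      (fir (fun i => sideBySide fun a : Fin ρ => C (ρ * i + a)) κ z)ᴴ = 1 := by
  obtain ⟨w, rfl⟩ := IsAlgClosed.exists_pow_nat_eq z (Nat.pos_of_ne_zero hρ)
  have hw : ‖w‖ = 1 := (pow_eq_one_iff_of_nonneg (norm_nonneg w) hρ).mp (by rwa [← norm_pow])
  have hω := Complex.isPrimitiveRoot_exp ρ hρ
  set ω := Complex.exp (2 * Real.pi * Complex.I / ρ)
  have hunit := hω.norm_mul_pow_eq_one hρ hw
  have hroot : ∀ k : ℕ, (w * ω ^ k) ^ ρ = w ^ ρ := fun k => by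
    rw [mul_pow, ← pow_mul, mul_comm k, pow_mul, hω.pow_eq_one, one_pow, mul_one]
  set P : Fin ρ → Matrix α β ℂ := fun a => fir (fun i => C (ρ * i + a)) κ (w ^ ρ)
  refine smul_right_injective _ (Nat.cast_ne_zero.mpr hρ : (ρ : ℂ) ≠ 0) ?_
  calc _ = (ρ : ℂ) • ∑ a, P a * (P a)ᴴ := by rw [fir_sideBySide, sideBySide_mul_conjTranspose]
    _ = ∑ k ∈ range ρ, (∑ a : Fin ρ, (w * ω ^ k) ^ ((ρ : ℤ) - 1 - a) • P a) *
          (∑ a : Fin ρ, (w * ω ^ k) ^ ((ρ : ℤ) - 1 - a) • P a)ᴴ :=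
        (sum_mul_pow_zpow_sub_smul_mul_conjTranspose hω hw _ P).symm
    _ = ∑ k ∈ range ρ, fir C (ρ * κ) (w * ω ^ k) * (fir C (ρ * κ) (w * ω ^ k))ᴴ := by
        refine sum_congr rfl fun k _ => ?_
        rw [fir_mul_eq_sum_polyphase _ ρ κ (norm_pos_iff.mp (by rw [hunit k]; exact one_pos)),
          hroot]
    _ = (ρ : ℂ) • 1 := by
        rw [sum_congr rfl fun k _ => hC _ (hunit k), sum_const, card_range,
          Nat.cast_smul_eq_nsmul]

end

theorem fir_coisometry_side_by_side_general
    (p m n ρ κ : ℕ) (hρ : 1 ≤ ρ) (hn : n = ρ * κ)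
    (B : ℕ → Matrix (Fin p) (Fin m) ℂ)
    (hcoiso : ∀ z : ℂ, ‖z‖ = 1 →
      (∑ j ∈ Finset.range n, z ^ (-(j + 1 : ℤ)) • B (j + 1)) *
        (∑ j ∈ Finset.range n, z ^ (-(j + 1 : ℤ)) • B (j + 1))ᴴ = 1) :
    ∀ z : ℂ, ‖z‖ = 1 →
      (∑ i ∈ Finset.range κ, z ^ (-(i + 1 : ℤ)) •
          Matrix.of (fun (x : Fin p) (r : Fin ρ × Fin m) =>
            B (ρ * i + r.1.val + 1) x r.2)) *
        (∑ i ∈ Finset.range κ, z ^ (-(i + 1 : ℤ)) •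
          Matrix.of (fun (x : Fin p) (r : Fin ρ × Fin m) =>
            B (ρ * i + r.1.val + 1) x r.2))ᴴ = 1 := by
  intro z hz
  subst hn
  exact fir_sideBySide_mul_conjTranspose_eq_one (fun j => B (j + 1)) (by omega) κ hcoiso hz

/-- if `F₀(z) = ∑_{j=1}^n z^{-j} B_j` is co-isometric on the unit
circle and `n = ρκ`, then the `p × ρm`-valued FIR `G(z) = ∑_{i=1}^κ z^{-i} 𝐁_i`,
where `𝐁_i` places `B_{(i-1)ρ+1}, …, B_{iρ}` side by side, is co-isometric on the
unit circle. -/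
theorem fir_coisometry_side_by_side
    (p m n ρ κ : ℕ) (hρ : 1 ≤ ρ) (hκ : 1 ≤ κ) (hn : n = ρ * κ)
    (B : ℕ → Matrix (Fin p) (Fin m) ℂ)
    (hcoiso : ∀ z : ℂ, ‖z‖ = 1 →
      (∑ j ∈ Finset.range n, z ^ (-(j + 1 : ℤ)) • B (j + 1)) *
        (∑ j ∈ Finset.range n, z ^ (-(j + 1 : ℤ)) • B (j + 1))ᴴ = 1) :
    ∀ z : ℂ, ‖z‖ = 1 →
      (∑ i ∈ Finset.range κ, z ^ (-(i + 1 : ℤ)) •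
          Matrix.of (fun (x : Fin p) (r : Fin ρ × Fin m) =>
            B (ρ * i + r.1.val + 1) x r.2)) *
        (∑ i ∈ Finset.range κ, z ^ (-(i + 1 : ℤ)) •
          Matrix.of (fun (x : Fin p) (r : Fin ρ × Fin m) =>
            B (ρ * i + r.1.val + 1) x r.2))ᴴ = 1 :=
  fir_coisometry_side_by_side_general p m n ρ κ hρ hn B hcoiso
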